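/- Let G be a group, n a positive integer, and φ : M → N a morphism of G-modules such that M and N are both n-divisible and φ restricts to an isomorphism of G-modules M[n] → N[n]. Then there exists a surjective group homomorphism from N^G/n·N^G onto the kernel of the induced homomorphism H^1(G, M)[n] → H^1(G, N)[n]; in particular, if N^G/n·N^G is finite, then this kernel is finite. -/

import Mathlib

/-! Basic definitions: fixed points, n-torsion, first group cohomology of a
`G`-module (an abelian group with a `DistribMulAction` of `G`), functoriality,
and the Kummer-theoretic connecting cocycle. -/

section Defs

variable (G : Type) [Group G]

/-- The subgroup of `G`-fixed points of a `G`-module `M`. -/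
def fixedAddSubgroup (M : Type) [AddCommGroup M] [DistribMulAction G M] :
    AddSubgroup M where
  carrier := {x | ∀ g : G, g • x = x}
  zero_mem' := fun g => smul_zero g
  add_mem' := fun {a b} ha hb g => by rw [smul_add, ha g, hb g]
  neg_mem' := fun {a} ha g => by rw [smul_neg, ha g]

/-- The `n`-torsion subgroup `A[n]` of an abelian group `A`. -/
def nTorsion (A : Type) [AddCommGroup A] (n : ℕ) : AddSubgroup A where
  carrier := {x | n • x = 0}
  zero_mem' := smul_zero n
  add_mem' := fun {a b} ha hb => by
    have ha' : n • a = 0 := ha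
    have hb' : n • b = 0 := hb
    show n • (a + b) = 0
    rw [smul_add, ha', hb', add_zero]
  neg_mem' := fun {a} ha => by
    have ha' : n • a = 0 := ha
    show n • (-a) = 0
    rw [smul_neg, ha', neg_zero]

/-- The multiplication-by-`n` homomorphism of an abelian group. -/
def nsmulHom (A : Type) [AddCommGroup A] (n : ℕ) : A →+ A where
  toFun x := n • x
  map_zero' := smul_zero n
  map_add' := smul_add n

/-- The subgroup `n·A` of an abelian group `A`. -/
def nMultiples (A : Type) [AddCommGroup A] (n : ℕ) : AddSubgroup A :=
  (nsmulHom A n).range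

variable (M : Type) [AddCommGroup M] [DistribMulAction G M]

/-- The induced `G`-action on the `n`-torsion subgroup. -/
instance nTorsionAction (n : ℕ) : DistribMulAction G (nTorsion M n) where
  smul g x := ⟨g • (x : M), by
    have hx : n • (x : M) = 0 := x.2
    show n • (g • (x : M)) = 0
    rw [← smul_comm g n (x : M), hx, smul_zero]⟩
  one_smul x := Subtype.ext (one_smul G (x : M))
  mul_smul g h x := Subtype.ext (mul_smul g h (x : M))
  smul_zero g := Subtype.ext (smul_zero g)
  smul_add g x y := Subtype.ext (smul_add g (x : M) (y : M))

@[simp] lemma nTorsion_smul_coe (n : ℕ) (g : G) (x : nTorsion M n) :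
    ((g • x : nTorsion M n) : M) = g • (x : M) := rfl

/-- The group of (inhomogeneous) 1-cocycles of `G` with coefficients in `M`. -/
def oneCocycles : AddSubgroup (G → M) where
  carrier := {f | ∀ σ τ : G, f (σ * τ) = f σ + σ • f τ}
  zero_mem' := fun σ τ => by simp
  add_mem' := fun {a b} ha hb σ τ => by
    simp only [Pi.add_apply, ha σ τ, hb σ τ, smul_add]
    abel
  neg_mem' := fun {a} ha σ τ => by
    simp only [Pi.neg_apply, ha σ τ, smul_neg]
    abel

/-- The group of 1-coboundaries of `G` with coefficients in `M`. -/
def oneCoboundaries : AddSubgroup (G → M) where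
  carrier := {f | ∃ x : M, ∀ σ : G, f σ = σ • x - x}
  zero_mem' := ⟨0, fun σ => by simp⟩
  add_mem' := by
    rintro a b ⟨x, hx⟩ ⟨y, hy⟩
    exact ⟨x + y, fun σ => by rw [Pi.add_apply, hx σ, hy σ, smul_add]; abel⟩
  neg_mem' := by
    rintro a ⟨x, hx⟩
    exact ⟨-x, fun σ => by rw [Pi.neg_apply, hx σ, smul_neg]; abel⟩

/-- The first group cohomology `H¹(G, M)`, defined as 1-cocycles modulo
1-coboundaries. -/
abbrev H1 := oneCocycles G M ⧸ ((oneCoboundaries G M).addSubgroupOf (oneCocycles G M))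

/-- The class of a 1-cocycle in `H¹(G, M)`. -/
def H1mk : oneCocycles G M → H1 G M := QuotientAddGroup.mk

variable {G M}
variable {N : Type} [AddCommGroup N] [DistribMulAction G N]

/-- The map on 1-cocycles induced by a `G`-equivariant homomorphism. -/
def oneCocyclesMap (φ : M →+ N) (hφ : ∀ (g : G) (x : M), φ (g • x) = g • φ x) :
    oneCocycles G M →+ oneCocycles G N where
  toFun f := ⟨fun σ => φ ((f : G → M) σ), fun σ τ => by
    show φ ((f : G → M) (σ * τ)) = φ ((f : G → M) σ) + σ • φ ((f : G → M) τ)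
    rw [f.2 σ τ, map_add, hφ]⟩
  map_zero' := by
    apply Subtype.ext
    funext σ
    simp
  map_add' f₁ f₂ := by
    apply Subtype.ext
    funext σ
    simp

/-- The map on `H¹` induced by a `G`-equivariant homomorphism. -/
def H1Map (φ : M →+ N) (hφ : ∀ (g : G) (x : M), φ (g • x) = g • φ x) :
    H1 G M →+ H1 G N :=
  QuotientAddGroup.map _ _ (oneCocyclesMap φ hφ) (by
    rintro ⟨f, hf⟩ hmem
    rw [AddSubgroup.mem_addSubgroupOf] at hmem
    obtain ⟨x, hx⟩ := hmem
    rw [AddSubgroup.mem_comap, AddSubgroup.mem_addSubgroupOf]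
    refine ⟨φ x, fun σ => ?_⟩
    show φ (f σ) = σ • φ x - φ x
    have hx' : f σ = σ • x - x := hx σ
    rw [hx', map_sub, hφ])

variable (G M)

/-- The Kummer cocycle attached to `y` with `n • y` a fixed point: the 1-cocycle
`σ ↦ σ • y - y` with values in the `n`-torsion of `M`. -/
def kummerCocycle (n : ℕ) (y : M) (hy : (n • y) ∈ fixedAddSubgroup G M) :
    oneCocycles G (nTorsion M n) :=
  ⟨fun σ => ⟨σ • y - y, by
      show n • (σ • y - y) = 0
      rw [smul_sub, ← smul_comm σ n y, hy σ, sub_self]⟩,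
   fun σ τ => by
      apply Subtype.ext
      show (σ * τ) • y - y = (σ • y - y) + σ • (τ • y - y)
      rw [mul_smul, smul_sub]
      abel⟩

end Defs
section Maps

variable {G : Type} [Group G]

/-- A homomorphism of abelian groups restricts to the `n`-torsion subgroups. -/
def torsMap {A B : Type} [AddCommGroup A] [AddCommGroup B] (n : ℕ) (f : A →+ B) :
    ↥(nTorsion A n) →+ ↥(nTorsion B n) where
  toFun x := ⟨f (x : A), by
    have hx : n • (x : A) = 0 := x.2
    show n • f (x : A) = 0
    rw [← map_nsmul f, hx, map_zero]⟩
  map_zero' := Subtype.ext (map_zero f)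
  map_add' a b := Subtype.ext (map_add f (a : A) (b : A))

/-- A `G`-equivariant homomorphism restricts to the subgroups of fixed
points. -/
def fixedMap {M N : Type} [AddCommGroup M] [DistribMulAction G M]
    [AddCommGroup N] [DistribMulAction G N]
    (φ : M →+ N) (hφ : ∀ (g : G) (x : M), φ (g • x) = g • φ x) :
    ↥(fixedAddSubgroup G M) →+ ↥(fixedAddSubgroup G N) where
  toFun x := ⟨φ (x : M), fun g => by
    have hx : ∀ g : G, g • (x : M) = (x : M) := x.2
    rw [← hφ g (x : M), hx g]⟩
  map_zero' := Subtype.ext (map_zero φ)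
  map_add' a b := Subtype.ext (map_add φ (a : M) (b : M))

end Maps

/-! For `y ∈ N^G` choose `x` with `n • x = y`. The Kummer cocycle `σ ↦ σ • x - x` takes values
in `N[n] ≅ M[n]`; transported to `M` its class is killed by `n` and becomes the coboundary of `x`
in `H¹(G, N)`. Changing `x` by an element of `N[n]`, or taking `x` fixed, changes the cocycle by a
coboundary, so this gives a map `N^G / n·N^G → ker`. It is onto: if `n • c = δ(n • z)` and
`φ ∘ c = δx`, then `c - δz` is `M[n]`-valued and is the transported Kummer cocycle of `x - φ z`. -/

lemma AddMonoidHom.exists_surjective_of_ker_le {A B C : Type*} [AddGroup A] [AddGroup B]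
    [AddGroup C] (f : A →+ B) (hf : Function.Surjective f) (g : A →+ C)
    (hg : Function.Surjective g) (hker : f.ker ≤ g.ker) :
    ∃ π : B →+ C, Function.Surjective π := by
  refine ⟨f.liftOfSurjective hf ⟨g, hker⟩, fun c => ?_⟩
  obtain ⟨a, rfl⟩ := hg c
  exact ⟨f a, f.liftOfRightInverse_comp_apply _ _ ⟨g, hker⟩ a⟩

section Kummer

variable {G M N : Type} [Group G] [AddCommGroup M] [DistribMulAction G M]
  [AddCommGroup N] [DistribMulAction G N] {n : ℕ}

lemma H1mk_eq_zero_iff (c : oneCocycles G M) :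
    H1mk G M c = 0 ↔ ∃ x : M, ∀ σ : G, (c : G → M) σ = σ • x - x := by
  rw [H1mk, QuotientAddGroup.eq_zero_iff, AddSubgroup.mem_addSubgroupOf]
  rfl

lemma torsMap_smul {φ : M →+ N} (hφ : ∀ (g : G) (x : M), φ (g • x) = g • φ x) (g : G)
    (x : nTorsion M n) : torsMap n φ (g • x) = g • torsMap n φ x :=
  Subtype.ext (hφ g x)

variable (G N n) in
def kummerDomain : AddSubgroup N :=
  (fixedAddSubgroup G N).comap (nsmulHom N n)

variable (G N n) in
def kummerHom : kummerDomain G N n →+ oneCocycles G (nTorsion N n) where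
  toFun y := kummerCocycle G N n y y.2
  map_zero' := Subtype.ext <| funext fun σ => Subtype.ext <| by simp [kummerCocycle]
  map_add' y y' := Subtype.ext <| funext fun σ => Subtype.ext <| by
    show σ • ((y : N) + y') - (y + y') = (σ • (y : N) - y) + (σ • (y' : N) - y')
    rw [smul_add]
    abel

noncomputable def torsionEquiv (φ : M →+ N)
    (hbij : Set.BijOn φ (nTorsion M n : Set M) (nTorsion N n : Set N)) :
    nTorsion M n ≃+ nTorsion N n :=
  AddEquiv.ofBijective (torsMap n φ) hbij.bijective

lemma torsionEquiv_symm_smul {φ : M →+ N} (hφ : ∀ (g : G) (x : M), φ (g • x) = g • φ x)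
    (hbij : Set.BijOn φ (nTorsion M n : Set M) (nTorsion N n : Set N)) (g : G)
    (t : nTorsion N n) :
    (torsionEquiv φ hbij).symm (g • t) = g • (torsionEquiv φ hbij).symm t :=
  (torsionEquiv φ hbij).symm_apply_eq.2 <| .symm <|
    (torsMap_smul hφ g _).trans (congrArg (g • ·) ((torsionEquiv φ hbij).apply_symm_apply t))

variable (φ : M →+ N) (hφ : ∀ (g : G) (x : M), φ (g • x) = g • φ x)
  (hbij : Set.BijOn φ (nTorsion M n : Set M) (nTorsion N n : Set N))

noncomputable def liftedKummer : kummerDomain G N n →+ oneCocycles G M :=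
  (oneCocyclesMap ((nTorsion M n).subtype.comp (torsionEquiv φ hbij).symm.toAddMonoidHom)
    fun g t => congrArg Subtype.val (torsionEquiv_symm_smul hφ hbij g t)).comp
    (kummerHom G N n)

lemma liftedKummer_mem_nTorsion (y : kummerDomain G N n) (σ : G) :
    (liftedKummer φ hφ hbij y : G → M) σ ∈ nTorsion M n :=
  ((torsionEquiv φ hbij).symm _).2

lemma map_liftedKummer (y : kummerDomain G N n) (σ : G) :
    φ ((liftedKummer φ hφ hbij y : G → M) σ) = σ • (y : N) - y :=
  congrArg Subtype.val ((torsionEquiv φ hbij).apply_symm_apply _)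

lemma liftedKummer_apply_eq {y : kummerDomain G N n} {σ : G} {m : M} (hm : m ∈ nTorsion M n)
    (hφm : φ m = σ • (y : N) - y) : (liftedKummer φ hφ hbij y : G → M) σ = m :=
  hbij.injOn (liftedKummer_mem_nTorsion φ hφ hbij y σ) hm
    ((map_liftedKummer φ hφ hbij y σ).trans hφm.symm)

noncomputable def kummerClass : kummerDomain G N n →+ H1 G M :=
  (QuotientAddGroup.mk' _).comp (liftedKummer φ hφ hbij)

lemma nsmul_kummerClass (y : kummerDomain G N n) : n • kummerClass φ hφ hbij y = 0 := by
  have hc : n • liftedKummer φ hφ hbij y = 0 :=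
    Subtype.ext <| funext fun σ => liftedKummer_mem_nTorsion φ hφ hbij y σ
  rw [kummerClass, AddMonoidHom.comp_apply, ← map_nsmul, hc, map_zero]

lemma H1Map_kummerClass (y : kummerDomain G N n) : H1Map φ hφ (kummerClass φ hφ hbij y) = 0 :=
  (H1mk_eq_zero_iff _).2 ⟨y, map_liftedKummer φ hφ hbij y⟩

lemma kummerClass_eq_zero_of_sub_mem_nTorsion (y : kummerDomain G N n) {w : N}
    (hw : w ∈ fixedAddSubgroup G N) (hyw : (y : N) - w ∈ nTorsion N n) :
    kummerClass φ hφ hbij y = 0 := by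
  set t := (torsionEquiv φ hbij).symm ⟨_, hyw⟩
  have hφt : φ t = (y : N) - w := congrArg Subtype.val ((torsionEquiv φ hbij).apply_symm_apply _)
  refine (H1mk_eq_zero_iff _).2 ⟨t, fun σ => liftedKummer_apply_eq φ hφ hbij (σ • t - t).2 ?_⟩
  rw [map_sub, hφ, hφt, smul_sub, hw σ]
  abel

lemma exists_kummerClass_eq (hdivM : ∀ x : M, ∃ y : M, n • y = x) (c : oneCocycles G M)
    (hc : n • H1mk G M c = 0) (hφc : H1Map φ hφ (H1mk G M c) = 0) :
    ∃ y, kummerClass φ hφ hbij y = H1mk G M c := by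
  obtain ⟨m, hm⟩ := (H1mk_eq_zero_iff (n • c)).1 <| by
    rw [← hc]
    exact map_nsmul (QuotientAddGroup.mk' _) n c
  obtain ⟨x, hx⟩ := (H1mk_eq_zero_iff _).1 hφc
  obtain ⟨z, rfl⟩ := hdivM m
  have htors : ∀ σ : G, (c : G → M) σ - (σ • z - z) ∈ nTorsion M n := by
    intro σ
    show n • _ = 0
    rw [smul_sub, show n • (c : G → M) σ = _ from hm σ, smul_sub, smul_comm]
    abel
  have hφc' : ∀ σ : G, φ ((c : G → M) σ - (σ • z - z)) = σ • (x - φ z) - (x - φ z) := by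
    intro σ
    rw [map_sub, map_sub, hφ, show φ ((c : G → M) σ) = _ from hx σ, smul_sub]
    abel
  have hy : x - φ z ∈ kummerDomain G N n := by
    intro σ
    show σ • (n • (x - φ z)) = n • (x - φ z)
    rw [← sub_eq_zero, smul_comm, ← smul_sub, ← hφc' σ, ← map_nsmul, htors σ, map_zero]
  refine ⟨⟨_, hy⟩, QuotientAddGroup.eq.2 <| (AddSubgroup.mem_addSubgroupOf).2 ⟨z, fun σ => ?_⟩⟩
  show -(liftedKummer φ hφ hbij ⟨_, hy⟩ : G → M) σ + (c : G → M) σ = σ • z - z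
  rw [liftedKummer_apply_eq φ hφ hbij (htors σ) (hφc' σ)]
  abel

noncomputable def kummerClassToKer :
    kummerDomain G N n →+ (torsMap n (H1Map (G := G) φ hφ)).ker :=
  ((kummerClass φ hφ hbij).codRestrict (nTorsion (H1 G M) n)
    (nsmul_kummerClass φ hφ hbij)).codRestrict _
    fun y => AddMonoidHom.mem_ker.2 (Subtype.ext (H1Map_kummerClass φ hφ hbij y))

lemma kummerClassToKer_surjective (hdivM : ∀ x : M, ∃ y : M, n • y = x) :
    Function.Surjective (kummerClassToKer φ hφ hbij) := by
  rintro ⟨⟨c, hc⟩, hker⟩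
  obtain ⟨c, rfl⟩ := QuotientAddGroup.mk_surjective c
  obtain ⟨y, hy⟩ := exists_kummerClass_eq φ hφ hbij hdivM c hc
    (congrArg Subtype.val (AddMonoidHom.mem_ker.1 hker))
  exact ⟨y, Subtype.ext (Subtype.ext hy)⟩

variable (G N n) in
def nsmulToFixed : kummerDomain G N n →+ fixedAddSubgroup G N :=
  ((nsmulHom N n).comp (kummerDomain G N n).subtype).codRestrict _ fun y => y.2

lemma nsmulToFixed_surjective (hdivN : ∀ x : N, ∃ y : N, n • y = x) :
    Function.Surjective (nsmulToFixed G N n) := by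
  rintro ⟨w, hw⟩
  obtain ⟨y, rfl⟩ := hdivN w
  exact ⟨⟨y, hw⟩, rfl⟩

lemma ker_le_ker_kummerClassToKer :
    ((QuotientAddGroup.mk' (nMultiples (fixedAddSubgroup G N) n)).comp
      (nsmulToFixed G N n)).ker ≤ (kummerClassToKer φ hφ hbij).ker := by
  intro y hy
  obtain ⟨w, hw⟩ := (QuotientAddGroup.eq_zero_iff _).1 hy
  refine AddMonoidHom.mem_ker.2 <| Subtype.ext <| Subtype.ext <|
    kummerClass_eq_zero_of_sub_mem_nTorsion φ hφ hbij y w.2 ?_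
  show n • ((y : N) - w) = 0
  rw [smul_sub, sub_eq_zero]
  exact (congrArg Subtype.val hw).symm

end Kummer

theorem exists_surjection_onto_ker_H1_torsion_map_general
    (G M N : Type) [Group G] [AddCommGroup M] [DistribMulAction G M]
    [AddCommGroup N] [DistribMulAction G N] (n : ℕ)
    (φ : M →+ N) (hφ : ∀ (g : G) (x : M), φ (g • x) = g • φ x)
    (hdivM : ∀ x : M, ∃ y : M, n • y = x) (hdivN : ∀ x : N, ∃ y : N, n • y = x)
    (hbij : Set.BijOn φ (nTorsion M n : Set M) (nTorsion N n : Set N)) :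
    (∃ π : (↥(fixedAddSubgroup G N) ⧸ nMultiples ↥(fixedAddSubgroup G N) n) →+
        ↥((torsMap n (H1Map (G := G) φ hφ)).ker),
      Function.Surjective π) ∧
    (Finite (↥(fixedAddSubgroup G N) ⧸ nMultiples ↥(fixedAddSubgroup G N) n) →
      Finite ↥((torsMap n (H1Map (G := G) φ hφ)).ker)) := by
  obtain ⟨π, hπ⟩ := AddMonoidHom.exists_surjective_of_ker_le
    ((QuotientAddGroup.mk' _).comp (nsmulToFixed G N n))
    ((QuotientAddGroup.mk'_surjective _).comp (nsmulToFixed_surjective hdivN))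
    (kummerClassToKer φ hφ hbij) (kummerClassToKer_surjective φ hφ hbij hdivM)
    (ker_le_ker_kummerClassToKer φ hφ hbij)
  exact ⟨⟨π, hπ⟩, fun _ => Finite.of_surjective π hπ⟩

/-- Let `φ : M → N` be a morphism of `n`-divisible `G`-modules
restricting to an isomorphism `M[n] → N[n]`. Then there is a surjective group
homomorphism from `N^G/n·N^G` onto the kernel of the induced homomorphism
`H¹(G, M)[n] → H¹(G, N)[n]`; in particular, if `N^G/n·N^G` is finite, then
this kernel is finite. -/
theorem exists_surjection_onto_ker_H1_torsion_map
    (G M N : Type) [Group G] [AddCommGroup M] [DistribMulAction G M]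
    [AddCommGroup N] [DistribMulAction G N] (n : ℕ) (hn : 0 < n)
    (φ : M →+ N) (hφ : ∀ (g : G) (x : M), φ (g • x) = g • φ x)
    (hdivM : ∀ x : M, ∃ y : M, n • y = x) (hdivN : ∀ x : N, ∃ y : N, n • y = x)
    (hbij : Set.BijOn φ (nTorsion M n : Set M) (nTorsion N n : Set N)) :
    (∃ π : (↥(fixedAddSubgroup G N) ⧸ nMultiples ↥(fixedAddSubgroup G N) n) →+
        ↥((torsMap n (H1Map (G := G) φ hφ)).ker),
      Function.Surjective π) ∧
    (Finite (↥(fixedAddSubgroup G N) ⧸ nMultiples ↥(fixedAddSubgroup G N) n) →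
      Finite ↥((torsMap n (H1Map (G := G) φ hφ)).ker)) :=
  exists_surjection_onto_ker_H1_torsion_map_general G M N n φ hφ hdivM hdivN hbij
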